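/- Let R be a semisimple commutative algebra spanned by a complete set of orthogonal idempotents {e_i}, and let P be a graded quiver with weight-0 subquiver Q, B = kQ its path algebra, and M_P = ⊕_{a, |a|>0} B a B the graded B-bimodule generated by the positive-weight arrows. Then M_P is a finitely generated projective B-bimodule and the graded path algebra kP is canonically isomorphic to the graded tensor algebra T_B M_P. -/

import Mathlib

/-!
As an element of `kP`, every path of positive weight is a product `q * a * p` in which `a` is its
last positive-weight arrow and `|q| = 0`. Sending it to `q ⊗ p` in the summand of `a` when also
`|p| = 0`, and to `0` otherwise, gives a `kQ`-bimodule map `kP → ⊕_{|a| > 0} kQ ⊗ kQᵒᵖ`. Followed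
by `P ⊗ Q ↦ P * a * Q` it fixes every positive arrow `a`, hence all of `M_P`, so `M_P` is a direct
summand of a finite free bimodule.

An algebra map out of `kP` is the same as orthogonal idempotents `e i` summing to `1` for the
vertices and elements `u a = e j * u a * e i` for the arrows `a : i ⟶ j`. A pair `(fB, fM)`
compatible with the bimodule structure supplies these, which is the universal property of
`T_{kQ} M_P`.
-/

open Quiver TensorProduct MulOpposite

noncomputable section
namespace Stmt2

def pathWeight {V : Type} [Quiver.{1} V] (w : ∀ i j : V, (i ⟶ j) → ℕ) :
    ∀ {i j : V}, Quiver.Path i j → ℕ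
  | _, _, .nil => 0
  | _, _, .cons p a => pathWeight w p + w _ _ a

section LastPositiveSplit

variable {V : Type} [Quiver.{1} V] (w : ∀ i j : V, (i ⟶ j) → ℕ)

@[simp] lemma pathWeight_nil (i : V) : pathWeight w (Path.nil : Path i i) = 0 := by
  rw [pathWeight]

@[simp] lemma pathWeight_cons {i j l : V} (p : Path i j) (a : j ⟶ l) :
    pathWeight w (p.cons a) = pathWeight w p + w _ _ a := by
  rw [pathWeight]

@[simp] lemma pathWeight_toPath {i j : V} (a : i ⟶ j) : pathWeight w a.toPath = w i j a := by
  simp [Hom.toPath]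

@[simp] lemma pathWeight_comp {i j l : V} (p : Path i j) (q : Path j l) :
    pathWeight w (p.comp q) = pathWeight w p + pathWeight w q := by
  induction q with
  | nil => simp
  | cons q a ih => rw [Path.comp_cons, pathWeight_cons, pathWeight_cons, ih, add_assoc]

/-- `p`, then the positive-weight arrow `a`, then the weight-zero path `q`. -/
structure LastPositiveSplit (i j : V) where
  {l m : V}
  p : Path i l
  a : l ⟶ m
  q : Path m j
  pos : 0 < w l m a
  weight_q : pathWeight w q = 0

variable {w}

def LastPositiveSplit.comp {i j l : V} (d : LastPositiveSplit w i j) (s : Path j l)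
    (hs : pathWeight w s = 0) : LastPositiveSplit w i l :=
  ⟨d.p, d.a, d.q.comp s, d.pos, by simp [d.weight_q, hs]⟩

def LastPositiveSplit.precomp {i j l : V} (s : Path l i) (d : LastPositiveSplit w i j) :
    LastPositiveSplit w l j :=
  ⟨s.comp d.p, d.a, d.q, d.pos, d.weight_q⟩

variable (w)

def lastPositiveSplit : ∀ {i j : V}, Path i j → Option (LastPositiveSplit w i j)
  | _, _, .nil => none
  | _, _, .cons p a =>
      if h : 0 < w _ _ a then some ⟨p, a, .nil, h, pathWeight_nil w _⟩
      else (lastPositiveSplit p).map fun d => d.comp a.toPath (by simpa using h)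

lemma lastPositiveSplit_eq_none_iff {i j : V} (r : Path i j) :
    lastPositiveSplit w r = none ↔ pathWeight w r = 0 := by
  induction r with
  | nil => simp [lastPositiveSplit]
  | cons p a ih =>
    by_cases h : 0 < w _ _ a
    · simp [lastPositiveSplit, h, h.ne']
    · simp [lastPositiveSplit, h, ih]
      omega

lemma lastPositiveSplit_comp {i j l : V} (r : Path i j) (s : Path j l)
    (hs : pathWeight w s = 0) :
    lastPositiveSplit w (r.comp s) = (lastPositiveSplit w r).map (·.comp s hs) := by
  induction s with
  | nil => rw [Path.comp_nil]; cases lastPositiveSplit w r <;> rfl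
  | cons s a ih =>
    simp only [pathWeight_cons, Nat.add_eq_zero_iff] at hs
    rw [Path.comp_cons, lastPositiveSplit, dif_neg (by omega), ih hs.1, Option.map_map]
    rfl

lemma lastPositiveSplit_precomp {i j l : V} (s : Path l i) (r : Path i j)
    (hs : pathWeight w s = 0) :
    lastPositiveSplit w (s.comp r) = (lastPositiveSplit w r).map (·.precomp s) := by
  induction r with
  | nil => simpa [lastPositiveSplit, lastPositiveSplit_eq_none_iff] using hs
  | cons r a ih =>
    by_cases h : 0 < w _ _ a
    · simp [lastPositiveSplit, h]
      rfl
    · simp only [Path.comp_cons, lastPositiveSplit, dif_neg h, ih, Option.map_map]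
      rfl

end LastPositiveSplit

section PathEval

variable {V : Type} [Quiver.{1} V] {C : Type} [Monoid C] (e : V → C) (u : ∀ i j : V, (i ⟶ j) → C)

def pathEval : ∀ {i j : V}, Path i j → C
  | i, _, .nil => e i
  | _, _, .cons p a => u _ _ a * pathEval p

@[simp] lemma pathEval_nil (i : V) : pathEval e u (Path.nil : Path i i) = e i := by
  rw [pathEval]

@[simp] lemma pathEval_cons {i j l : V} (p : Path i j) (a : j ⟶ l) :
    pathEval e u (p.cons a) = u _ _ a * pathEval e u p := by
  rw [pathEval]

variable {e u}

lemma pathEval_mul_source (he : ∀ i, e i * e i = e i) {i j : V} (p : Path i j) :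
    pathEval e u p * e i = pathEval e u p := by
  induction p with
  | nil => simpa using he i
  | cons p a ih => rw [pathEval_cons, mul_assoc, ih]

lemma target_mul_pathEval (he : ∀ i, e i * e i = e i)
    (hu : ∀ i j (a : i ⟶ j), e j * u i j a = u i j a) {i j : V} (p : Path i j) :
    e j * pathEval e u p = pathEval e u p := by
  cases p with
  | nil => simpa using he i
  | cons p a => rw [pathEval_cons, ← mul_assoc, hu]

lemma pathEval_comp (he : ∀ i, e i * e i = e i)
    (hu : ∀ i j (a : i ⟶ j), e j * u i j a = u i j a) {i j l : V} (q : Path i j)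
    (p : Path j l) : pathEval e u (q.comp p) = pathEval e u p * pathEval e u q := by
  induction p with
  | nil => rw [Path.comp_nil, pathEval_nil, target_mul_pathEval he hu]
  | cons p a ih => rw [Path.comp_cons, pathEval_cons, pathEval_cons, ih, mul_assoc]

end PathEval

section PathBasis

variable {k : Type} [CommRing k] {V : Type} [Quiver.{1} V] [DecidableEq V]
  {A : Type} [Ring A] [Algebra k A]

/-- Composition order: `b p * b q` is the path "`q`, then `p`". -/
def IsPathBasis (b : Module.Basis (Σ i j : V, Path i j) k A) : Prop :=
  ∀ (i j i' j' : V) (p : Path i j) (q : Path i' j'),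
    b ⟨i, j, p⟩ * b ⟨i', j', q⟩ =
      if h : i = j' then b ⟨i', j, q.comp (show Path j' j from h ▸ p)⟩ else 0

namespace IsPathBasis

variable {b : Module.Basis (Σ i j : V, Path i j) k A} (hb : IsPathBasis b)
include hb

lemma mul_eq {i j l : V} (p : Path j l) (q : Path i j) :
    b ⟨j, l, p⟩ * b ⟨i, j, q⟩ = b ⟨i, l, q.comp p⟩ := by
  rw [hb, dif_pos rfl]

lemma mul_eq_zero {i j i' j' : V} (p : Path i j) (q : Path i' j') (h : i ≠ j') :
    b ⟨i, j, p⟩ * b ⟨i', j', q⟩ = 0 := by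
  rw [hb, dif_neg h]

lemma cons_eq {i j l : V} (p : Path i j) (a : j ⟶ l) :
    b ⟨i, l, p.cons a⟩ = b ⟨j, l, a.toPath⟩ * b ⟨i, j, p⟩ :=
  (hb.mul_eq a.toPath p).symm

theorem exists_algHom [Fintype V] (hone : (1 : A) = ∑ i : V, b ⟨i, i, Path.nil⟩)
    {C : Type} [Ring C] [Algebra k C] (e : V → C) (u : ∀ i j : V, (i ⟶ j) → C)
    (he : ∀ i j, e i * e j = if i = j then e i else 0) (he_sum : ∑ i, e i = 1)
    (hu_left : ∀ i j (a : i ⟶ j), e j * u i j a = u i j a)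
    (hu_right : ∀ i j (a : i ⟶ j), u i j a * e i = u i j a) :
    ∃ F : A →ₐ[k] C, (∀ i, F (b ⟨i, i, Path.nil⟩) = e i) ∧
      ∀ i j (a : i ⟶ j), F (b ⟨i, j, a.toPath⟩) = u i j a := by
  have he_idem : ∀ i, e i * e i = e i := fun i => by simpa using he i i
  let L : A →ₗ[k] C := b.constr k fun z => pathEval e u z.2.2
  have hL : ∀ z, L (b z) = pathEval e u z.2.2 := b.constr_basis k _
  have hL_mul : ∀ x y, L (x * y) = L x * L y := by
    suffices (LinearMap.mul k A).compr₂ L = (LinearMap.mul k C).compl₁₂ L L from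
      fun x y => LinearMap.congr_fun₂ this x y
    refine b.ext fun ⟨i, j, p⟩ => b.ext fun ⟨i', j', q⟩ => ?_
    simp only [LinearMap.compr₂_apply, LinearMap.compl₁₂_apply, LinearMap.mul_apply']
    by_cases h : i = j'
    · subst h
      rw [hb.mul_eq, hL, hL, hL, pathEval_comp he_idem hu_left]
    · rw [hb.mul_eq_zero p q h, map_zero, hL, hL, ← pathEval_mul_source he_idem p,
        ← target_mul_pathEval he_idem hu_left q, mul_assoc, ← mul_assoc (e i), he, if_neg h,
        zero_mul, mul_zero]
  have hL_one : L 1 = 1 := by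
    simp only [hone, map_sum, hL, pathEval_nil, he_sum]
  refine ⟨AlgHom.ofLinearMap L hL_one hL_mul, fun i => (hL _).trans (pathEval_nil e u i),
    fun i j a => ?_⟩
  simp only [AlgHom.ofLinearMap_apply, hL, Hom.toPath, pathEval_cons, pathEval_nil, hu_right]

lemma algHom_ext {C : Type} [Ring C] [Algebra k C] {F G : A →ₐ[k] C}
    (h_nil : ∀ i, F (b ⟨i, i, Path.nil⟩) = G (b ⟨i, i, Path.nil⟩))
    (h_arrow : ∀ i j (a : i ⟶ j), F (b ⟨i, j, a.toPath⟩) = G (b ⟨i, j, a.toPath⟩)) :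
    F = G := by
  refine AlgHom.toLinearMap_injective (b.ext fun ⟨i, j, p⟩ => ?_)
  induction p with
  | nil => exact h_nil i
  | cons p a ih =>
    simp only [AlgHom.toLinearMap_apply] at ih ⊢
    rw [hb.cons_eq, map_mul, map_mul, ih, h_arrow]

end IsPathBasis

end PathBasis

section PathAlgebra

variable {k : Type} [CommRing k] {V : Type} [Quiver.{1} V] {A : Type} [Ring A] [Algebra k A]
  (w : ∀ i j : V, (i ⟶ j) → ℕ) (b : Module.Basis (Σ i j : V, Path i j) k A)

def kQ : Subalgebra k A :=
  Algebra.adjoin k {x | ∃ (i j : V) (p : Path i j), pathWeight w p = 0 ∧ x = b ⟨i, j, p⟩}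

/-- `M_P = ⊕_{|a| > 0} kQ a kQ`. -/
def arrowBimodule : Submodule k A :=
  Submodule.span k {x | ∃ (p q : kQ w b) (i j : V) (a : i ⟶ j),
    0 < w i j a ∧ x = (p : A) * b ⟨i, j, a.toPath⟩ * (q : A)}

variable {w}

def kQ.path {i j : V} (p : Path i j) (hp : pathWeight w p = 0) : kQ w b :=
  ⟨b ⟨i, j, p⟩, Algebra.subset_adjoin ⟨i, j, p, hp, rfl⟩⟩

@[simp] lemma kQ.coe_path {i j : V} (p : Path i j) (hp : pathWeight w p = 0) :
    (kQ.path b p hp : A) = b ⟨i, j, p⟩ := rfl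

variable {b}

lemma kQ.path_mul_path [DecidableEq V] (hb : IsPathBasis b) {i j l : V} (p : Path j l)
    (q : Path i j) (hp : pathWeight w p = 0) (hq : pathWeight w q = 0) :
    kQ.path b p hp * kQ.path b q hq = kQ.path b (q.comp p) (by simp [hp, hq]) :=
  Subtype.ext (hb.mul_eq p q)

lemma kQ.path_mul_path_of_ne [DecidableEq V] (hb : IsPathBasis b) {i j i' j' : V}
    (p : Path i j) (q : Path i' j') (hp : pathWeight w p = 0) (hq : pathWeight w q = 0)
    (h : i ≠ j') : kQ.path b p hp * kQ.path b q hq = 0 :=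
  Subtype.ext (hb.mul_eq_zero p q h)

lemma kQ.sum_path_nil [Fintype V] (hone : (1 : A) = ∑ i : V, b ⟨i, i, Path.nil⟩) :
    ∑ i : V, kQ.path b (Path.nil : Path i i) (pathWeight_nil w i) = 1 :=
  Subtype.ext (by simpa using hone.symm)

lemma mul_arrow_mul_mem_arrowBimodule (P Q : kQ w b) {i j : V} {a : i ⟶ j}
    (ha : 0 < w i j a) : (P : A) * b ⟨i, j, a.toPath⟩ * Q ∈ arrowBimodule w b :=
  Submodule.subset_span ⟨P, Q, i, j, a, ha, rfl⟩

lemma arrow_mul_mem_arrowBimodule (Q : kQ w b) {i j : V} {a : i ⟶ j} (ha : 0 < w i j a) :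
    b ⟨i, j, a.toPath⟩ * Q ∈ arrowBimodule w b := by
  simpa using mul_arrow_mul_mem_arrowBimodule (1 : kQ w b) Q ha

lemma arrow_mem_arrowBimodule {i j : V} {a : i ⟶ j} (ha : 0 < w i j a) :
    b ⟨i, j, a.toPath⟩ ∈ arrowBimodule w b := by
  simpa using arrow_mul_mem_arrowBimodule (1 : kQ w b) ha

variable {C : Type} [Ring C] [Algebra k C]

lemma algHom_apply_kQ [DecidableEq V] (hb : IsPathBasis b) (F : A →ₐ[k] C) (fB : kQ w b →ₐ[k] C)
    (h_nil : ∀ i, F (b ⟨i, i, Path.nil⟩) = fB (kQ.path b Path.nil (pathWeight_nil w i)))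
    (h_arrow : ∀ i j (a : i ⟶ j) (ha : pathWeight w a.toPath = 0),
      F (b ⟨i, j, a.toPath⟩) = fB (kQ.path b a.toPath ha))
    (p : kQ w b) : F p = fB p := by
  have h_path : ∀ {i j : V} (p : Path i j) (hp : pathWeight w p = 0),
      F (b ⟨i, j, p⟩) = fB (kQ.path b p hp) := by
    intro i j p hp
    induction p with
    | nil => exact h_nil _
    | cons p a ih =>
      simp only [pathWeight_cons, Nat.add_eq_zero_iff] at hp
      rw [hb.cons_eq, map_mul, ih hp.1, h_arrow _ _ a (by simpa using hp.2), ← map_mul,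
        kQ.path_mul_path hb]
      rfl
  refine AlgHom.congr_fun (AlgHom.adjoin_ext (φ₁ := F.comp (kQ w b).val) ?_) p
  rintro _ ⟨_, _, p, hp, rfl⟩
  exact h_path p hp

lemma algHom_apply_arrowBimodule (F : A →ₐ[k] C) (fB : kQ w b →ₐ[k] C)
    (fM : arrowBimodule w b →ₗ[k] C)
    (hL : ∀ (p : kQ w b) (x y : arrowBimodule w b), (y : A) = p * x → fM y = fB p * fM x)
    (hR : ∀ (q : kQ w b) (x y : arrowBimodule w b), (y : A) = x * q → fM y = fM x * fB q)
    (hFB : ∀ p : kQ w b, F p = fB p)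
    (h_arrow : ∀ i j (a : i ⟶ j) (ha : 0 < w i j a),
      F (b ⟨i, j, a.toPath⟩) = fM ⟨_, arrow_mem_arrowBimodule ha⟩)
    (x : arrowBimodule w b) : F x = fM x := by
  obtain ⟨x, hx⟩ := x
  induction hx using Submodule.span_induction with
  | mem x hx =>
    obtain ⟨P, Q, i, j, a, ha, rfl⟩ := hx
    rw [map_mul, map_mul, hFB, hFB, h_arrow _ _ _ ha,
      hL P ⟨_, arrow_mul_mem_arrowBimodule Q ha⟩ ⟨_, mul_arrow_mul_mem_arrowBimodule P Q ha⟩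
        (mul_assoc _ _ _),
      hR Q ⟨_, arrow_mem_arrowBimodule ha⟩ ⟨_, arrow_mul_mem_arrowBimodule Q ha⟩ rfl, mul_assoc]
  | zero => exact (map_zero F).trans (map_zero fM).symm
  | add x y hx hy ihx ihy =>
    rw [map_add, ihx, ihy]
    exact (map_add fM ⟨x, hx⟩ ⟨y, hy⟩).symm
  | smul c x hx ihx =>
    rw [map_smul, ihx]
    exact (map_smul fM c ⟨x, hx⟩).symm

variable [DecidableEq V] [Fintype V] (hb : IsPathBasis b)
  (hone : (1 : A) = ∑ i : V, b ⟨i, i, Path.nil⟩) (fB : kQ w b →ₐ[k] C)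
  (fM : arrowBimodule w b →ₗ[k] C)
  (hL : ∀ (p : kQ w b) (x y : arrowBimodule w b), (y : A) = p * x → fM y = fB p * fM x)
  (hR : ∀ (q : kQ w b) (x y : arrowBimodule w b), (y : A) = x * q → fM y = fM x * fB q)
include hb hone hL hR

lemma exists_algHom_kQ_arrowBimodule :
    ∃ F : A →ₐ[k] C, (∀ p : kQ w b, F p = fB p) ∧ ∀ x : arrowBimodule w b, F x = fM x := by
  let nil (i : V) : kQ w b := kQ.path b Path.nil (pathWeight_nil w i)
  let u (i j : V) (a : i ⟶ j) : C := if ha : 0 < w i j a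
    then fM ⟨_, arrow_mem_arrowBimodule ha⟩
    else fB (kQ.path b a.toPath (by simpa using ha))
  have he : ∀ i j, fB (nil i) * fB (nil j) = if i = j then fB (nil i) else 0 := by
    intro i j
    split_ifs with h
    · subst h
      exact (map_mul fB _ _).symm.trans (congrArg fB (kQ.path_mul_path hb _ _ _ _))
    · rw [← map_mul, kQ.path_mul_path_of_ne hb _ _ _ _ h, map_zero]
  have he_sum : ∑ i, fB (nil i) = 1 := by rw [← map_sum, kQ.sum_path_nil hone, map_one]
  have hu_left : ∀ i j (a : i ⟶ j), fB (nil j) * u i j a = u i j a := by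
    intro i j a
    by_cases ha : 0 < w i j a
    · simp only [u, dif_pos ha]
      exact (hL _ _ _ (hb.mul_eq Path.nil a.toPath).symm).symm
    · simp only [u, dif_neg ha, ← map_mul]
      exact congrArg fB (kQ.path_mul_path hb _ _ _ _)
  have hu_right : ∀ i j (a : i ⟶ j), u i j a * fB (nil i) = u i j a := by
    intro i j a
    by_cases ha : 0 < w i j a
    · simp only [u, dif_pos ha]
      exact (hR _ _ _ (hb.mul_eq a.toPath Path.nil).symm).symm
    · simp only [u, dif_neg ha, ← map_mul]
      exact congrArg fB (kQ.path_mul_path hb _ _ _ _)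
  obtain ⟨F, hF_nil, hF_arrow⟩ :=
    hb.exists_algHom hone (fun i => fB (nil i)) u he he_sum hu_left hu_right
  have hFB := algHom_apply_kQ hb F fB hF_nil fun i j a ha => by
    rw [hF_arrow]
    exact dif_neg (by simp_all)
  exact ⟨F, hFB, algHom_apply_arrowBimodule F fB fM hL hR hFB fun i j a ha => by
    rw [hF_arrow]
    exact dif_pos ha⟩

theorem existsUnique_algHom_kQ_arrowBimodule :
    ∃! F : A →ₐ[k] C, (∀ p : kQ w b, F p = fB p) ∧ ∀ x : arrowBimodule w b, F x = fM x := by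
  obtain ⟨F, hFB, hFM⟩ := exists_algHom_kQ_arrowBimodule hb hone fB fM hL hR
  refine ⟨F, ⟨hFB, hFM⟩, fun G ⟨hGB, hGM⟩ => hb.algHom_ext (fun i => ?_) (fun i j a => ?_)⟩
  · exact (hGB (kQ.path b _ (pathWeight_nil w i))).trans (hFB _).symm
  · by_cases ha : 0 < w i j a
    · exact (hGM ⟨_, arrow_mem_arrowBimodule ha⟩).trans (hFM _).symm
    · exact (hGB (kQ.path b _ (by simpa using ha))).trans (hFB _).symm

end PathAlgebra

abbrev PositiveArrow {V : Type} [Quiver.{1} V] (w : ∀ i j : V, (i ⟶ j) → ℕ) :=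
  Σ i j : V, {a : i ⟶ j // 0 < w i j a}

theorem exists_finset_arrowBimodule_eq_span {k : Type} [CommRing k] {V : Type} [Quiver.{1} V]
    [Fintype V] [∀ i j : V, Fintype (i ⟶ j)] {A : Type} [Ring A] [Algebra k A]
    (w : ∀ i j : V, (i ⟶ j) → ℕ) (b : Module.Basis (Σ i j : V, Path i j) k A) :
    ∃ S : Finset A, arrowBimodule w b =
      Submodule.span k {x | ∃ (p q : kQ w b) (s : A), s ∈ S ∧ x = p * s * q} := by
  classical
  refine ⟨Finset.univ.image fun t : PositiveArrow w => b ⟨t.1, t.2.1, t.2.2.1.toPath⟩, ?_⟩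
  unfold arrowBimodule
  congr 1
  ext x
  simp only [Finset.mem_image, Finset.mem_univ, true_and, Set.mem_ofPred_eq]
  constructor
  · rintro ⟨p, q, i, j, a, ha, rfl⟩
    exact ⟨p, q, _, ⟨⟨i, j, a, ha⟩, rfl⟩, rfl⟩
  · rintro ⟨p, q, _, ⟨⟨i, j, a, ha⟩, rfl⟩, rfl⟩
    exact ⟨p, q, i, j, a, ha, rfl⟩

/-- `Pi.single_smul'` for a semiring acting on itself, in a form that `rw` can match. -/
lemma smul_single_eq_single_mul {ι R : Type*} [DecidableEq ι] [Semiring R] (t : ι) (c x : R) :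
    c • Pi.single t x = Pi.single t (c * x) :=
  (Pi.single_smul' t c x).symm

section MulArrow

variable {k : Type} [CommRing k] {V : Type} [Quiver.{1} V] {A : Type} [Ring A] [Algebra k A]
  {w : ∀ i j : V, (i ⟶ j) → ℕ} (b : Module.Basis (Σ i j : V, Path i j) k A)

local notation "Bᵉ" => kQ w b ⊗[k] (kQ w b)ᵐᵒᵖ

def mulArrow (t : PositiveArrow w) : Bᵉ →ₗ[k] arrowBimodule w b :=
  TensorProduct.lift <| LinearMap.mk₂ k
    (fun P Q => ⟨P * b ⟨t.1, t.2.1, t.2.2.1.toPath⟩ * (unop Q : kQ w b),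
      mul_arrow_mul_mem_arrowBimodule P (unop Q) t.2.2.2⟩)
    (fun P P' Q => Subtype.ext (by simp [add_mul]))
    (fun c P Q => Subtype.ext (by simp))
    (fun P Q Q' => Subtype.ext (by simp [mul_add]))
    (fun c P Q => Subtype.ext (by simp))

variable {b}

@[simp] lemma coe_mulArrow_tmul (t : PositiveArrow w) (P : kQ w b) (Q : (kQ w b)ᵐᵒᵖ) :
    (mulArrow b t (P ⊗ₜ[k] Q) : A) = P * b ⟨t.1, t.2.1, t.2.2.1.toPath⟩ * (unop Q : kQ w b) := by
  simp [mulArrow]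

lemma coe_mulArrow_tmul_one_mul (t : PositiveArrow w) (p : kQ w b) (z : Bᵉ) :
    (mulArrow b t ((p ⊗ₜ[k] (1 : (kQ w b)ᵐᵒᵖ)) * z) : A) = p * mulArrow b t z := by
  induction z using TensorProduct.induction_on with
  | zero => simp
  | tmul P Q => simp [Algebra.TensorProduct.tmul_mul_tmul, mul_assoc]
  | add z z' hz hz' => simp [mul_add, hz, hz']

lemma coe_mulArrow_one_tmul_mul (t : PositiveArrow w) (q : kQ w b) (z : Bᵉ) :
    (mulArrow b t (((1 : kQ w b) ⊗ₜ[k] op q) * z) : A) = mulArrow b t z * q := by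
  induction z using TensorProduct.induction_on with
  | zero => simp
  | tmul P Q => simp [Algebra.TensorProduct.tmul_mul_tmul, mul_assoc]
  | add z z' hz hz' => simp [mul_add, add_mul, hz, hz']

variable [DecidableEq V] [∀ i j : V, DecidableEq (i ⟶ j)] [Fintype (PositiveArrow w)]

variable (b) in
def sumMulArrow : (PositiveArrow w → Bᵉ) →ₗ[k] arrowBimodule w b :=
  LinearMap.lsum k (fun _ => Bᵉ) k (mulArrow b)

lemma coe_sumMulArrow (v : PositiveArrow w → Bᵉ) :
    (sumMulArrow b v : A) = ∑ t, (mulArrow b t (v t) : A) := by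
  simp [sumMulArrow]

lemma coe_sumMulArrow_tmul_one_smul (p : kQ w b) (v : PositiveArrow w → Bᵉ) :
    (sumMulArrow b ((p ⊗ₜ[k] (1 : (kQ w b)ᵐᵒᵖ)) • v) : A) = p * sumMulArrow b v := by
  simp only [coe_sumMulArrow, Finset.mul_sum, Pi.smul_apply, smul_eq_mul,
    coe_mulArrow_tmul_one_mul]

lemma coe_sumMulArrow_one_tmul_smul (q : kQ w b) (v : PositiveArrow w → Bᵉ) :
    (sumMulArrow b (((1 : kQ w b) ⊗ₜ[k] op q) • v) : A) = sumMulArrow b v * q := by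
  simp only [coe_sumMulArrow, Finset.sum_mul, Pi.smul_apply, smul_eq_mul,
    coe_mulArrow_one_tmul_mul]

end MulArrow

section ArrowCoord

variable {k : Type} [CommRing k] {V : Type} [Quiver.{1} V] [DecidableEq V]
  [∀ i j : V, DecidableEq (i ⟶ j)] {A : Type} [Ring A] [Algebra k A]
  (w : ∀ i j : V, (i ⟶ j) → ℕ) (b : Module.Basis (Σ i j : V, Path i j) k A)

local notation "Bᵉ" => kQ w b ⊗[k] (kQ w b)ᵐᵒᵖ

variable {w} in
def LastPositiveSplit.coord {i j : V} (d : LastPositiveSplit w i j) : PositiveArrow w → Bᵉ :=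
  if hp : pathWeight w d.p = 0 then
    Pi.single (⟨_, _, d.a, d.pos⟩ : PositiveArrow w)
      (kQ.path b d.q d.weight_q ⊗ₜ[k] op (kQ.path b d.p hp))
  else 0

def pathCoord {i j : V} (r : Path i j) : PositiveArrow w → Bᵉ :=
  (lastPositiveSplit w r).elim 0 (·.coord b)

def arrowCoord : A →ₗ[k] PositiveArrow w → Bᵉ :=
  b.constr k fun z => pathCoord w b z.2.2

@[simp] lemma arrowCoord_basis {i j : V} (r : Path i j) :
    arrowCoord w b (b ⟨i, j, r⟩) = pathCoord w b r :=
  b.constr_basis k _ _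

variable {w}

lemma arrowCoord_arrow {i j : V} {a : i ⟶ j} (ha : 0 < w i j a) :
    arrowCoord w b (b ⟨i, j, a.toPath⟩) = Pi.single (⟨i, j, a, ha⟩ : PositiveArrow w)
      (kQ.path b Path.nil (pathWeight_nil w j) ⊗ₜ[k]
        op (kQ.path b Path.nil (pathWeight_nil w i))) := by
  simp [pathCoord, Hom.toPath, lastPositiveSplit, ha, LastPositiveSplit.coord]

variable {b} (hb : IsPathBasis b)
include hb

lemma LastPositiveSplit.coord_comp {i j l : V} (d : LastPositiveSplit w i j) (s : Path j l)
    (hs : pathWeight w s = 0) :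
    (d.comp s hs).coord b = (kQ.path b s hs ⊗ₜ[k] (1 : (kQ w b)ᵐᵒᵖ)) • d.coord b := by
  rw [coord, coord]
  split_ifs with h₁ h₂ h₂
  · rw [smul_single_eq_single_mul, Algebra.TensorProduct.tmul_mul_tmul, one_mul,
      kQ.path_mul_path hb]
    rfl
  · exact absurd h₁ h₂
  · exact absurd h₂ h₁
  · rw [smul_zero]

lemma LastPositiveSplit.coord_precomp {i j l : V} (s : Path l i) (d : LastPositiveSplit w i j)
    (hs : pathWeight w s = 0) :
    (d.precomp s).coord b = ((1 : kQ w b) ⊗ₜ[k] op (kQ.path b s hs)) • d.coord b := by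
  have hsp : pathWeight w (d.precomp s).p = pathWeight w d.p := by
    simp [LastPositiveSplit.precomp, hs]
  by_cases hp : pathWeight w d.p = 0
  · rw [coord, coord, dif_pos hp, dif_pos (hsp.trans hp), smul_single_eq_single_mul,
      Algebra.TensorProduct.tmul_mul_tmul, one_mul, ← op_mul, kQ.path_mul_path hb]
    rfl
  · rw [coord, coord, dif_neg hp, dif_neg (hsp.trans_ne hp), smul_zero]

lemma LastPositiveSplit.tmul_one_smul_coord_of_ne {i j i' j' : V} (d : LastPositiveSplit w i j)
    (s : Path i' j') (hs : pathWeight w s = 0) (h : i' ≠ j) :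
    (kQ.path b s hs ⊗ₜ[k] (1 : (kQ w b)ᵐᵒᵖ)) • d.coord b = 0 := by
  by_cases hp : pathWeight w d.p = 0
  · rw [coord, dif_pos hp, smul_single_eq_single_mul, Algebra.TensorProduct.tmul_mul_tmul,
      one_mul, kQ.path_mul_path_of_ne hb _ _ _ _ h, TensorProduct.zero_tmul, Pi.single_zero]
  · rw [coord, dif_neg hp, smul_zero]

lemma LastPositiveSplit.one_tmul_smul_coord_of_ne {i j i' j' : V} (d : LastPositiveSplit w i j)
    (s : Path i' j') (hs : pathWeight w s = 0) (h : i ≠ j') :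
    ((1 : kQ w b) ⊗ₜ[k] op (kQ.path b s hs)) • d.coord b = 0 := by
  by_cases hp : pathWeight w d.p = 0
  · rw [coord, dif_pos hp, smul_single_eq_single_mul, Algebra.TensorProduct.tmul_mul_tmul,
      one_mul, ← op_mul, kQ.path_mul_path_of_ne hb _ _ _ _ h, op_zero, TensorProduct.tmul_zero,
      Pi.single_zero]
  · rw [coord, dif_neg hp, smul_zero]

lemma pathCoord_comp {i j l : V} (r : Path i j) (s : Path j l) (hs : pathWeight w s = 0) :
    pathCoord w b (r.comp s) = (kQ.path b s hs ⊗ₜ[k] (1 : (kQ w b)ᵐᵒᵖ)) • pathCoord w b r := by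
  rw [pathCoord, pathCoord, lastPositiveSplit_comp w r s hs]
  cases lastPositiveSplit w r with
  | none => exact (smul_zero _).symm
  | some d => exact d.coord_comp hb s hs

lemma pathCoord_precomp {i j l : V} (s : Path l i) (r : Path i j) (hs : pathWeight w s = 0) :
    pathCoord w b (s.comp r) = ((1 : kQ w b) ⊗ₜ[k] op (kQ.path b s hs)) • pathCoord w b r := by
  rw [pathCoord, pathCoord, lastPositiveSplit_precomp w s r hs]
  cases lastPositiveSplit w r with
  | none => exact (smul_zero _).symm
  | some d => exact d.coord_precomp hb s hs

lemma arrowCoord_path_mul {i j : V} (s : Path i j) (hs : pathWeight w s = 0) (x : A) :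
    arrowCoord w b (b ⟨i, j, s⟩ * x) =
      (kQ.path b s hs ⊗ₜ[k] (1 : (kQ w b)ᵐᵒᵖ)) • arrowCoord w b x := by
  suffices arrowCoord w b ∘ₗ LinearMap.mulLeft k (b ⟨i, j, s⟩) =
      (LinearMap.mulLeft k (kQ.path b s hs ⊗ₜ[k] (1 : (kQ w b)ᵐᵒᵖ))).compLeft _ ∘ₗ
        arrowCoord w b from
    LinearMap.congr_fun this x
  refine b.ext fun ⟨i', j', r⟩ => ?_
  show arrowCoord w b (b ⟨i, j, s⟩ * b ⟨i', j', r⟩) =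
    (kQ.path b s hs ⊗ₜ[k] (1 : (kQ w b)ᵐᵒᵖ)) • arrowCoord w b (b ⟨i', j', r⟩)
  rw [arrowCoord_basis]
  by_cases h : i = j'
  · subst h
    rw [hb.mul_eq, arrowCoord_basis, pathCoord_comp hb _ _ hs]
  · rw [hb.mul_eq_zero _ _ h, map_zero, pathCoord]
    cases lastPositiveSplit w r with
    | none => exact (smul_zero _).symm
    | some d => exact (d.tmul_one_smul_coord_of_ne hb s hs h).symm

lemma arrowCoord_mul_path {i j : V} (s : Path i j) (hs : pathWeight w s = 0) (x : A) :
    arrowCoord w b (x * b ⟨i, j, s⟩) =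
      ((1 : kQ w b) ⊗ₜ[k] op (kQ.path b s hs)) • arrowCoord w b x := by
  suffices arrowCoord w b ∘ₗ LinearMap.mulRight k (b ⟨i, j, s⟩) =
      (LinearMap.mulLeft k ((1 : kQ w b) ⊗ₜ[k] op (kQ.path b s hs))).compLeft _ ∘ₗ
        arrowCoord w b from
    LinearMap.congr_fun this x
  refine b.ext fun ⟨i', j', r⟩ => ?_
  show arrowCoord w b (b ⟨i', j', r⟩ * b ⟨i, j, s⟩) =
    ((1 : kQ w b) ⊗ₜ[k] op (kQ.path b s hs)) • arrowCoord w b (b ⟨i', j', r⟩)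
  rw [arrowCoord_basis]
  by_cases h : i' = j
  · subst h
    rw [hb.mul_eq, arrowCoord_basis, pathCoord_precomp hb _ _ hs]
  · rw [hb.mul_eq_zero _ _ h, map_zero, pathCoord]
    cases lastPositiveSplit w r with
    | none => exact (smul_zero _).symm
    | some d => exact (d.one_tmul_smul_coord_of_ne hb s hs h).symm

lemma arrowCoord_mul_left (p : kQ w b) (x : A) :
    arrowCoord w b (p * x) = (p ⊗ₜ[k] (1 : (kQ w b)ᵐᵒᵖ)) • arrowCoord w b x := by
  obtain ⟨p, hp⟩ := p
  induction hp using Algebra.adjoin_induction generalizing x with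
  | mem _ h =>
    obtain ⟨i, j, s, hs, rfl⟩ := h
    exact arrowCoord_path_mul hb s hs x
  | algebraMap c =>
    rw [← Algebra.smul_def, map_smul]
    change _ = (algebraMap k (kQ w b) c ⊗ₜ[k] (1 : (kQ w b)ᵐᵒᵖ)) • _
    rw [← Algebra.TensorProduct.algebraMap_apply, algebraMap_smul]
  | add p q hp hq ihp ihq =>
    rw [add_mul, map_add, ihp, ihq]
    funext t
    simp only [Pi.add_apply, Pi.smul_apply, smul_eq_mul, ← add_mul, ← TensorProduct.add_tmul]
    rfl
  | mul p q hp hq ihp ihq =>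
    rw [mul_assoc, ihp, ihq, smul_smul, Algebra.TensorProduct.tmul_mul_tmul, mul_one]
    rfl

lemma arrowCoord_mul_right (q : kQ w b) (x : A) :
    arrowCoord w b (x * q) = ((1 : kQ w b) ⊗ₜ[k] op q) • arrowCoord w b x := by
  obtain ⟨q, hq⟩ := q
  induction hq using Algebra.adjoin_induction generalizing x with
  | mem _ h =>
    obtain ⟨i, j, s, hs, rfl⟩ := h
    exact arrowCoord_mul_path hb s hs x
  | algebraMap c =>
    rw [← Algebra.commutes, ← Algebra.smul_def, map_smul]
    change _ = ((1 : kQ w b) ⊗ₜ[k] op (algebraMap k (kQ w b) c)) • _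
    rw [← MulOpposite.algebraMap_apply, ← Algebra.TensorProduct.algebraMap_apply',
      algebraMap_smul]
  | add p q hp hq ihp ihq =>
    rw [mul_add, map_add, ihp, ihq]
    funext t
    simp only [Pi.add_apply, Pi.smul_apply, smul_eq_mul, ← add_mul, ← TensorProduct.tmul_add,
      ← op_add]
    rfl
  | mul p q hp hq ihp ihq =>
    rw [← mul_assoc, ihq, ihp, smul_smul, Algebra.TensorProduct.tmul_mul_tmul, one_mul]
    rfl

variable [Fintype (PositiveArrow w)]

lemma sumMulArrow_arrowCoord {x : A} (hx : x ∈ arrowBimodule w b) :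
    (sumMulArrow b (arrowCoord w b x) : A) = x := by
  induction hx using Submodule.span_induction with
  | mem x hx =>
    obtain ⟨P, Q, i, j, a, ha, rfl⟩ := hx
    rw [arrowCoord_mul_right hb, arrowCoord_mul_left hb, coe_sumMulArrow_one_tmul_smul,
      coe_sumMulArrow_tmul_one_smul, arrowCoord_arrow b ha, sumMulArrow, LinearMap.lsum_piSingle,
      coe_mulArrow_tmul, unop_op, kQ.coe_path, kQ.coe_path, hb.mul_eq, hb.mul_eq, Path.comp_nil,
      Path.nil_comp]
  | zero => simp
  | add x y _ _ hx hy => simp [hx, hy]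
  | smul c x _ hx => simp [hx]

theorem exists_fin_pi_retract_arrowBimodule :
    ∃ (n : ℕ) (f : arrowBimodule w b →ₗ[k] (Fin n → Bᵉ))
      (g : (Fin n → Bᵉ) →ₗ[k] arrowBimodule w b),
      (∀ x, g (f x) = x) ∧
      (∀ (p : kQ w b) (x y : arrowBimodule w b), (y : A) = p * x →
        f y = fun i => (p ⊗ₜ[k] (1 : (kQ w b)ᵐᵒᵖ)) * f x i) ∧
      (∀ (q : kQ w b) (x y : arrowBimodule w b), (y : A) = x * q →
        f y = fun i => ((1 : kQ w b) ⊗ₜ[k] op q) * f x i) ∧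
      (∀ (p : kQ w b) (v : Fin n → Bᵉ),
        ((g (fun i => (p ⊗ₜ[k] (1 : (kQ w b)ᵐᵒᵖ)) * v i) : arrowBimodule w b) : A) =
          p * (g v : A)) ∧
      (∀ (q : kQ w b) (v : Fin n → Bᵉ),
        ((g (fun i => ((1 : kQ w b) ⊗ₜ[k] op q) * v i) : arrowBimodule w b) : A) =
          (g v : A) * q) := by
  let φ := LinearEquiv.funCongrLeft k Bᵉ (Fintype.equivFin (PositiveArrow w))
  have hφ : ∀ v i, φ.symm v i = v ((Fintype.equivFin (PositiveArrow w)).symm i) :=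
    fun _ _ => rfl
  refine ⟨Fintype.card (PositiveArrow w),
    φ.symm.toLinearMap ∘ₗ arrowCoord w b ∘ₗ (arrowBimodule w b).subtype,
    sumMulArrow b ∘ₗ φ.toLinearMap, fun x => ?_, fun p x y hy => ?_, fun q x y hy => ?_,
    fun p v => coe_sumMulArrow_tmul_one_smul p (φ v),
    fun q v => coe_sumMulArrow_one_tmul_smul q (φ v)⟩
  · ext
    simpa using sumMulArrow_arrowCoord hb x.2
  · ext i
    simp [hφ, hy, arrowCoord_mul_left hb]
  · ext i
    simp [hφ, hy, arrowCoord_mul_right hb]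

end ArrowCoord

theorem statement2
    (k : Type) [Field k]
    (V : Type) [Fintype V] [DecidableEq V] [Quiver.{1} V]
    [∀ i j : V, Fintype (i ⟶ j)]
    (w : ∀ i j : V, (i ⟶ j) → ℕ)
    (A : Type) [Ring A] [Algebra k A]
    (b : Module.Basis (Σ i j : V, Quiver.Path i j) k A)
    (hmul : ∀ (i j i' j' : V) (p : Quiver.Path i j) (q : Quiver.Path i' j'),
      b ⟨i, j, p⟩ * b ⟨i', j', q⟩ =
        if h : i = j' then b ⟨i', j, Quiver.Path.comp q (show Quiver.Path j' j from h ▸ p)⟩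
        else 0)
    (hone : (1 : A) = ∑ i : V, b ⟨i, i, Quiver.Path.nil⟩)
    -- `B = kQ`, the subalgebra spanned by the weight-0 paths
    (B : Subalgebra k A)
    (hB : B = Algebra.adjoin k
      {x | ∃ (i j : V) (p : Quiver.Path i j), pathWeight w p = 0 ∧ x = b ⟨i, j, p⟩})
    -- `M_P = ⊕_{|a| > 0} B a B`, the `B`-sub-bimodule generated by the
    -- positive-weight arrows
    (M : Submodule k A)
    (hM : M = Submodule.span k
      {x | ∃ (p q : B) (i j : V) (a : i ⟶ j),
        0 < w i j a ∧ x = (p : A) * b ⟨i, j, a.toPath⟩ * (q : A)}) :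
    -- (1) `M_P` is finitely generated as a `B`-bimodule;
    (∃ S : Finset A,
      M = Submodule.span k {x | ∃ (p q : B) (s : A), s ∈ S ∧ x = (p : A) * s * (q : A)}) ∧
    -- (2) `M_P` is a projective `B`-bimodule (a retract of a finite free
    -- `B`-bimodule `(B ⊗ Bᵐᵒᵖ)ⁿ`);
    (∃ (n : ℕ) (f : ↥M →ₗ[k] (Fin n → B ⊗[k] Bᵐᵒᵖ)) (g : (Fin n → B ⊗[k] Bᵐᵒᵖ) →ₗ[k] ↥M),
      (∀ x, g (f x) = x) ∧
      (∀ (p : B) (x y : ↥M), (y : A) = (p : A) * (x : A) →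
        f y = fun i => (p ⊗ₜ[k] (1 : Bᵐᵒᵖ)) * f x i) ∧
      (∀ (q : B) (x y : ↥M), (y : A) = (x : A) * (q : A) →
        f y = fun i => ((1 : B) ⊗ₜ[k] op q) * f x i) ∧
      (∀ (p : B) (v : Fin n → B ⊗[k] Bᵐᵒᵖ),
        ((g (fun i => (p ⊗ₜ[k] (1 : Bᵐᵒᵖ)) * v i) : ↥M) : A) = (p : A) * ((g v : ↥M) : A)) ∧
      (∀ (q : B) (v : Fin n → B ⊗[k] Bᵐᵒᵖ),
        ((g (fun i => ((1 : B) ⊗ₜ[k] op q) * v i) : ↥M) : A) = ((g v : ↥M) : A) * (q : A))) ∧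
    -- (3) `kP ≅ T_B M_P`: the inclusions `B ⊆ A`, `M_P ⊆ A` exhibit `A` as the
    -- tensor algebra of the `B`-bimodule `M_P`, via the universal property.
    (∀ (C : Type) [Ring C] [Algebra k C] (fB : B →ₐ[k] C) (fM : ↥M →ₗ[k] C),
      (∀ (p : B) (x y : ↥M), (y : A) = (p : A) * (x : A) → fM y = fB p * fM x) →
      (∀ (q : B) (x y : ↥M), (y : A) = (x : A) * (q : A) → fM y = fM x * fB q) →
      ∃! F : A →ₐ[k] C,
        (∀ p : B, F (p : A) = fB p) ∧ (∀ x : ↥M, F (x : A) = fM x)) := by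
  classical
  subst hB hM
  exact ⟨exists_finset_arrowBimodule_eq_span w b, exists_fin_pi_retract_arrowBimodule hmul,
    fun C _ _ fB fM hL hR => existsUnique_algHom_kQ_arrowBimodule hmul hone fB fM hL hR⟩

end Stmt2
end
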